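/- arXiv:2506.22306 — 5 statements merged into one kernel-verified Lean document; each statement's English description precedes it below -/
import Mathlib

section
/- Rotation preserves noncrossing matchings: if M is a noncrossing matching on {1,...,n} (no two arcs (i,j),(i',j') with i<i'<j<j') and ρ is the map sending each arc (a,b) to (ρ(a),ρ(b)) where ρ(i) = i-1 mod n, then ρ(M) is also a noncrossing matching. -/
/-- `ρ` on `{1,…,n}` : `i ↦ i-1 mod n`, with representatives in `{1,…,n}`. -/
def rotIdx (n i : ℕ) : ℕ := if i = 1 then n else i - 1

/-- Rotation of an arc, reordered so the smaller endpoint comes first. -/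
def rotArc (n : ℕ) (p : ℕ × ℕ) : ℕ × ℕ :=
  (min (rotIdx n p.1) (rotIdx n p.2), max (rotIdx n p.1) (rotIdx n p.2))

/-- `M` is a matching on `{1,…,n}` : every arc `(i,j)` satisfies `1 ≤ i ≤ j ≤ n`
and every element of `{1,…,n}` occurs in at most one arc. -/
def IsMatchingOn (n : ℕ) (M : Finset (ℕ × ℕ)) : Prop :=
  (∀ p ∈ M, 1 ≤ p.1 ∧ p.1 ≤ p.2 ∧ p.2 ≤ n) ∧
  ∀ x, 1 ≤ x → x ≤ n → (M.filter (fun p => p.1 = x ∨ p.2 = x)).card ≤ 1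

/-- A matching is crossing if it contains arcs `(i,j)`, `(i',j')` with `i < i' < j < j'`. -/
def IsCrossing (M : Finset (ℕ × ℕ)) : Prop :=
  ∃ p ∈ M, ∃ q ∈ M, p.1 < q.1 ∧ q.1 < p.2 ∧ p.2 < q.2

/-!
Away from the point `1`, `ρ` is the order-preserving shift `i ↦ i - 1`, so a crossing of two
rotated arcs avoiding `1` comes from a crossing of the original arcs. An arc `(1, j)` becomes
`(j - 1, n)`, which ends at the last point, so in a crossing it must be the arc starting inside
the other one, `(a - 1, b - 1)` with `a - 1 < j - 1 < b - 1 < n`; then `1 < a < j < b` is a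
crossing of the original arcs. Being a matching is preserved because `ρ` permutes `{1, …, n}`.
-/

def rotIdxInv (n x : ℕ) : ℕ := if x = n then 1 else x + 1

section Rotation

variable {n : ℕ} {p q : ℕ × ℕ}

lemma rotIdxInv_bounds {x : ℕ} (hx : 1 ≤ x) (hxn : x ≤ n) :
    1 ≤ rotIdxInv n x ∧ rotIdxInv n x ≤ n := by
  unfold rotIdxInv
  split_ifs <;> omega

lemma rotArc_bounds (hp : 1 ≤ p.1 ∧ p.1 ≤ p.2 ∧ p.2 ≤ n) :
    1 ≤ (rotArc n p).1 ∧ (rotArc n p).1 ≤ (rotArc n p).2 ∧ (rotArc n p).2 ≤ n := by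
  simp only [rotArc, rotIdx]
  split_ifs <;> omega

lemma rotArc_incident_iff (hp : 1 ≤ p.1 ∧ p.1 ≤ p.2 ∧ p.2 ≤ n) {x : ℕ} (hx : 1 ≤ x) :
    ((rotArc n p).1 = x ∨ (rotArc n p).2 = x) ↔
      (p.1 = rotIdxInv n x ∨ p.2 = rotIdxInv n x) := by
  simp only [rotArc, rotIdx, rotIdxInv]
  split_ifs <;> omega

lemma crosses_of_rotArc_crosses (hp : 1 ≤ p.1 ∧ p.1 ≤ p.2 ∧ p.2 ≤ n)
    (hq : 1 ≤ q.1 ∧ q.1 ≤ q.2 ∧ q.2 ≤ n)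
    (h : (rotArc n p).1 < (rotArc n q).1 ∧ (rotArc n q).1 < (rotArc n p).2 ∧
      (rotArc n p).2 < (rotArc n q).2) :
    (p.1 < q.1 ∧ q.1 < p.2 ∧ p.2 < q.2) ∨ (q.1 < p.1 ∧ p.1 < q.2 ∧ q.2 < p.2) := by
  simp only [rotArc, rotIdx] at h
  split_ifs at h <;> omega

end Rotation

section Matching

variable {n : ℕ} {M : Finset (ℕ × ℕ)}

lemma IsMatchingOn.image_rotArc (hM : IsMatchingOn n M) : IsMatchingOn n (M.image (rotArc n)) := by
  refine ⟨?_, fun x hx hxn => ?_⟩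
  · simp only [Finset.mem_image, forall_exists_index, and_imp, forall_apply_eq_imp_iff₂]
    exact fun p hp => rotArc_bounds (hM.1 p hp)
  · have hfilter : M.filter (fun p => (rotArc n p).1 = x ∨ (rotArc n p).2 = x) =
        M.filter (fun p => p.1 = rotIdxInv n x ∨ p.2 = rotIdxInv n x) :=
      Finset.filter_congr fun p hp => rotArc_incident_iff (hM.1 p hp) hx
    obtain ⟨hx', hxn'⟩ := rotIdxInv_bounds hx hxn
    rw [Finset.filter_image, hfilter]
    exact Finset.card_image_le.trans (hM.2 _ hx' hxn')

lemma not_isCrossing_image_rotArc (hM : ∀ p ∈ M, 1 ≤ p.1 ∧ p.1 ≤ p.2 ∧ p.2 ≤ n)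
    (hnc : ¬ IsCrossing M) : ¬ IsCrossing (M.image (rotArc n)) := by
  rintro ⟨_, hp', _, hq', hcross⟩
  obtain ⟨p, hp, rfl⟩ := Finset.mem_image.mp hp'
  obtain ⟨q, hq, rfl⟩ := Finset.mem_image.mp hq'
  rcases crosses_of_rotArc_crosses (hM p hp) (hM q hq) hcross with hpq | hqp
  · exact hnc ⟨p, hp, q, hq, hpq⟩
  · exact hnc ⟨q, hq, p, hp, hqp⟩

end Matching

theorem rotation_preserves_noncrossing_general (n : ℕ) (M : Finset (ℕ × ℕ))
    (hM : IsMatchingOn n M) (hnc : ¬ IsCrossing M) :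
    IsMatchingOn n (M.image (rotArc n)) ∧ ¬ IsCrossing (M.image (rotArc n)) :=
  ⟨hM.image_rotArc, not_isCrossing_image_rotArc hM.1 hnc⟩

/-- Rotation preserves noncrossing matchings. -/
theorem rotation_preserves_noncrossing (n : ℕ) (hn : 0 < n) (M : Finset (ℕ × ℕ))
    (hM : IsMatchingOn n M) (hnc : ¬ IsCrossing M) :
    IsMatchingOn n (M.image (rotArc n)) ∧ ¬ IsCrossing (M.image (rotArc n)) :=
  rotation_preserves_noncrossing_general n M hM hnc
end

section
/- The matching M_i constructed between rows i and i+1 of a standard Young tableau by the recursive algorithm (matching each entry of row i+1, in increasing order, to the largest unmatched entry of row i not exceeding it) is noncrossing: it contains no two arcs (a,b), (a',b') with a < a' < b < b'. -/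
theorem syt_row_matching_noncrossing_general (p q : ℕ)
    (a : Fin p → ℕ) (b : Fin q → ℕ)
    (ha : StrictMono a) (hb : StrictMono b)
    (f : Fin q → Fin p) (hinj : Function.Injective f)
    (hgreedy : ∀ ℓ j, a j ≤ b ℓ → (∀ ℓ', ℓ' < ℓ → f ℓ' ≠ j) → j ≤ f ℓ) :
    ∀ ℓ ℓ' : Fin q, ¬ (a (f ℓ) < a (f ℓ') ∧ a (f ℓ') < b ℓ ∧ b ℓ < b ℓ') := by
  rintro ℓ ℓ' ⟨hfa, hab, hbb⟩
  have hℓ : ℓ < ℓ' := hb.lt_iff_lt.mp hbb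
  -- `f ℓ'` is still free when `ℓ` is processed, and fits under `b ℓ`, so greedy picks at least it.
  have hfree : ∀ ℓ'' < ℓ, f ℓ'' ≠ f ℓ' := fun ℓ'' hℓ'' heq =>
    (hℓ''.trans hℓ).ne (hinj heq)
  exact (hgreedy ℓ (f ℓ') hab.le hfree).not_gt (ha.lt_iff_lt.mp hfa)

/-- The matching between two consecutive rows of a standard Young tableau produced by
the greedy algorithm (each entry of row `i+1`, in increasing order, matched to the
largest unmatched entry of row `i` not exceeding it) is noncrossing: there are no two
arcs `(a (f ℓ), b ℓ)`, `(a (f ℓ'), b ℓ')` with `a (f ℓ) < a (f ℓ') < b ℓ < b ℓ'`. -/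
theorem syt_row_matching_noncrossing (p q : ℕ) (hqp : q ≤ p)
    (a : Fin p → ℕ) (b : Fin q → ℕ)
    (ha : StrictMono a) (hb : StrictMono b)
    (hcol : ∀ ℓ : Fin q, a (Fin.castLE hqp ℓ) < b ℓ)
    (f : Fin q → Fin p) (hinj : Function.Injective f)
    (hle : ∀ ℓ, a (f ℓ) ≤ b ℓ)
    (hgreedy : ∀ ℓ j, a j ≤ b ℓ → (∀ ℓ', ℓ' < ℓ → f ℓ' ≠ j) → j ≤ f ℓ) :
    ∀ ℓ ℓ' : Fin q, ¬ (a (f ℓ) < a (f ℓ') ∧ a (f ℓ') < b ℓ ∧ b ℓ < b ℓ') :=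
  syt_row_matching_noncrossing_general p q a b ha hb f hinj hgreedy
end

section
/- The matching M_i constructed between rows i and i+1 of a standard Young tableau by the recursive algorithm is standard: every integer strictly between the two endpoints of any arc of M_i that is itself an entry of row i or row i+1 is the endpoint of some arc of M_i. -/
theorem mem_range_of_greedy {ι κ α : Type*} [LinearOrder ι] [LinearOrder κ] [LinearOrder α]
    {a : ι → α} {b : κ → α} {f : κ → ι} (ha : StrictMono a)
    (hgreedy : ∀ ℓ j, a j ≤ b ℓ → (∀ ℓ', ℓ' < ℓ → f ℓ' ≠ j) → j ≤ f ℓ)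
    {ℓ : κ} {j : ι} (hlt : a (f ℓ) < a j) (hle : a j ≤ b ℓ) : j ∈ Set.range f := by
  by_contra hj
  have hunmatched : ∀ ℓ', ℓ' < ℓ → f ℓ' ≠ j := fun ℓ' _ hℓ' => hj ⟨ℓ', hℓ'⟩
  exact (ha.lt_iff_lt.mp hlt).not_ge (hgreedy ℓ j hle hunmatched)

theorem syt_row_matching_standard_general (p q : ℕ)
    (a : Fin p → ℕ) (b : Fin q → ℕ)
    (ha : StrictMono a)
    (f : Fin q → Fin p)
    (hgreedy : ∀ ℓ j, a j ≤ b ℓ → (∀ ℓ', ℓ' < ℓ → f ℓ' ≠ j) → j ≤ f ℓ) :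
    ∀ (ℓ : Fin q) (x : ℕ), a (f ℓ) < x → x < b ℓ →
      ((∃ j : Fin p, a j = x) ∨ (∃ ℓ' : Fin q, b ℓ' = x)) →
      ∃ ℓ'' : Fin q, a (f ℓ'') = x ∨ b ℓ'' = x := by
  rintro ℓ x hax hxb (⟨j, rfl⟩ | ⟨ℓ', rfl⟩)
  · obtain ⟨ℓ'', rfl⟩ := mem_range_of_greedy ha hgreedy hax hxb.le
    exact ⟨ℓ'', Or.inl rfl⟩
  · exact ⟨ℓ', Or.inr rfl⟩

/-- The matching between two consecutive rows of a standard Young tableau produced by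
the greedy algorithm is standard: every integer strictly between the endpoints of an
arc which is itself an entry of row `i` or row `i+1` is the endpoint of some arc. -/
theorem syt_row_matching_standard (p q : ℕ) (hqp : q ≤ p)
    (a : Fin p → ℕ) (b : Fin q → ℕ)
    (ha : StrictMono a) (hb : StrictMono b)
    (hcol : ∀ ℓ : Fin q, a (Fin.castLE hqp ℓ) < b ℓ)
    (f : Fin q → Fin p) (hinj : Function.Injective f)
    (hle : ∀ ℓ, a (f ℓ) ≤ b ℓ)
    (hgreedy : ∀ ℓ j, a j ≤ b ℓ → (∀ ℓ', ℓ' < ℓ → f ℓ' ≠ j) → j ≤ f ℓ) :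
    ∀ (ℓ : Fin q) (x : ℕ), a (f ℓ) < x → x < b ℓ →
      ((∃ j : Fin p, a j = x) ∨ (∃ ℓ' : Fin q, b ℓ' = x)) →
      ∃ ℓ'' : Fin q, a (f ℓ'') = x ∨ b ℓ'' = x :=
  syt_row_matching_standard_general p q a b ha f hgreedy
end

section
/- Let T be a rectangular standard Young tableau with n rows and let S be a uniformly proper rectangular subtableau of T (so T = T_1 S T_2 as a horizontal concatenation). If the m-diagram φ(T) contains an arc (a,b) such that a is an entry of S or b is an entry of S, then both a and b are entries of S. -/
/-!
Entries of a row of `T` left of `S` are at most `k` and those right of it exceed `k + r * w`,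
so the greedy matching of rows `i` and `i + 1` matches columns left of `S` in row `i + 1` to
columns left of `S` in row `i`. A column of `S` in row `i + 1` then still finds a free column
of `S` in row `i` weakly left of the cell above it in the left-justified `S`, whose entry is
smaller, so its partner exceeds `k`, does not exceed its own entry and hence lies in `S`. Thus the
`w` columns of `S` in row `i + 1` use up those of row `i`, and columns right of `S` are matched
outside `S`.
-/

/-- `T` (as a function `ℕ → ℕ → ℕ`, row-column indexed from `0`) is a rectangular
standard Young tableau with `r` rows, `c` columns and content `{1,…,r*c}` :
rows strictly increase left-to-right, columns strictly increase top-to-bottom. -/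
def IsRectSYT (r c : ℕ) (T : ℕ → ℕ → ℕ) : Prop :=
  (∀ i j, i < r → j + 1 < c → T i j < T i (j + 1)) ∧
  (∀ i j, i + 1 < r → j < c → T i j < T (i + 1) j) ∧
  (∀ i j, i < r → j < c → 1 ≤ T i j ∧ T i j ≤ r * c) ∧
  (∀ v, 1 ≤ v → v ≤ r * c → ∃ i j, i < r ∧ j < c ∧ T i j = v)

/-- One step of the jeu de taquin slide of the empty box at position `p` in an
`r × c` rectangular tableau: slide the right neighbour `b` left if `b < a` (entries
being distinct, `≤` and `<` agree), else slide the lower neighbour `a` up. -/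
def slideNext (r c : ℕ) (T : ℕ → ℕ → ℕ) (p : ℕ × ℕ) : ℕ × ℕ :=
  if p.1 + 1 < r ∧ p.2 + 1 < c then
    (if T p.1 (p.2 + 1) ≤ T (p.1 + 1) p.2 then (p.1, p.2 + 1) else (p.1 + 1, p.2))
  else if p.2 + 1 < c then (p.1, p.2 + 1)
  else if p.1 + 1 < r then (p.1 + 1, p.2)
  else p

/-- The sliding path of the empty box during promotion, starting in the top-left
corner; the path stabilizes once the empty box has nothing below or to its right. -/
def slidePath (r c : ℕ) (T : ℕ → ℕ → ℕ) : ℕ → ℕ × ℕ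
  | 0 => (0, 0)
  | k + 1 => slideNext r c T (slidePath r c T k)

open Classical in
/-- Jeu de taquin promotion of a rectangular standard Young tableau: erase the entry
`1` in the top-left corner, slide along the sliding path, decrement all entries by `1`
and put `r*c` in the final empty box. -/
noncomputable def promote (r c : ℕ) (T : ℕ → ℕ → ℕ) : ℕ → ℕ → ℕ := fun i j =>
  if (i, j) = slidePath r c T (r + c) then r * c
  else if h : ∃ k, slidePath r c T k = (i, j) then
    T (slidePath r c T (Nat.find h + 1)).1 (slidePath r c T (Nat.find h + 1)).2 - 1
  else T i j - 1

/-- The greedy matching between rows `i` and `i+1` of `T` : the list whose `j`-th item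
is the column (in row `i`) matched to column `j` of row `i+1`, namely the largest
column `j'` of row `i` with `T i j' ≤ T (i+1) j` that is not already matched. -/
def partnerList (c : ℕ) (T : ℕ → ℕ → ℕ) (i : ℕ) : ℕ → List ℕ
  | 0 => []
  | j + 1 =>
    let prev := partnerList c T i j
    prev ++ [((List.range c).filter
      (fun j' => decide (T i j' ≤ T (i + 1) j ∧ j' ∉ prev))).foldr max 0]

/-- The column of row `i` matched to column `j` of row `i+1` by the greedy algorithm. -/
def partnerCol (c : ℕ) (T : ℕ → ℕ → ℕ) (i j : ℕ) : ℕ :=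
  (partnerList c T i (j + 1)).getD j 0

/-- The m-diagram `φ(T)` of an `r × c` rectangular standard Young tableau: the union
over `0 ≤ i ≤ r-2` of the arcs `(T i (partnerCol c T i j), T (i+1) j)` of the greedy
matchings between consecutive rows. -/
def mDiagram (r c : ℕ) (T : ℕ → ℕ → ℕ) : Finset (ℕ × ℕ) :=
  ((Finset.range (r - 1)) ×ˢ (Finset.range c)).image
    (fun p => (T p.1 (partnerCol c T p.1 p.2), T (p.1 + 1) p.2))

namespace IsRectSYT

variable {r c : ℕ} {T : ℕ → ℕ → ℕ}

theorem row_lt (hT : IsRectSYT r c T) {i j j' : ℕ} (hi : i < r) (hjj' : j < j') (hj' : j' < c) :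
    T i j < T i j' := by
  induction hjj' with
  | refl => exact hT.1 i j hi hj'
  | step hle ih => exact (ih (by omega)).trans (hT.1 i _ hi hj')

theorem row_le (hT : IsRectSYT r c T) {i j j' : ℕ} (hi : i < r) (hjj' : j ≤ j') (hj' : j' < c) :
    T i j ≤ T i j' := by
  rcases hjj'.lt_or_eq with h | rfl
  · exact (hT.row_lt hi h hj').le
  · rfl

theorem eq_of_entry_eq (hT : IsRectSYT r c T) {i j i' j' : ℕ} (hi : i < r) (hj : j < c)
    (hi' : i' < r) (hj' : j' < c) (he : T i j = T i' j') : i = i' ∧ j = j' := by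
  have hinj := Finset.inj_on_of_surj_on_of_card_le
    (s := Finset.range r ×ˢ Finset.range c) (t := Finset.Icc 1 (r * c)) (fun p _ => T p.1 p.2)
    (fun p hp => by
      simp only [Finset.mem_product, Finset.mem_range] at hp
      exact Finset.mem_Icc.mpr (hT.2.2.1 p.1 p.2 hp.1 hp.2))
    (fun v hv => by
      obtain ⟨i₀, j₀, hi₀, hj₀, rfl⟩ :=
        hT.2.2.2 v (Finset.mem_Icc.mp hv).1 (Finset.mem_Icc.mp hv).2
      exact ⟨(i₀, j₀), by simp [hi₀, hj₀], rfl⟩)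
    (by simp)
  simpa using hinj (a₁ := (i, j)) (by simp [hi, hj]) (a₂ := (i', j')) (by simp [hi', hj']) he

end IsRectSYT

section GreedyMatching

variable {r c : ℕ} {T : ℕ → ℕ → ℕ} {i : ℕ}

theorem partnerList_length (j : ℕ) : (partnerList c T i j).length = j := by
  induction j with
  | zero => rfl
  | succ n ih => simp [partnerList, ih]

theorem partnerCol_eq_foldr_max (j : ℕ) : partnerCol c T i j =
    ((List.range c).filter
      (fun t => decide (T i t ≤ T (i + 1) j ∧ t ∉ partnerList c T i j))).foldr max 0 := by
  simp [partnerCol, partnerList, partnerList_length]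

theorem partnerList_succ (j : ℕ) :
    partnerList c T i (j + 1) = partnerList c T i j ++ [partnerCol c T i j] := by
  rw [partnerCol_eq_foldr_max]
  rfl

theorem mem_partnerList {j t : ℕ} :
    t ∈ partnerList c T i j ↔ ∃ j' < j, partnerCol c T i j' = t := by
  induction j with
  | zero => simp [partnerList]
  | succ n ih =>
    simp only [partnerList_succ, List.mem_append, ih, List.mem_singleton, Nat.lt_succ_iff_lt_or_eq,
      or_and_right, exists_or, exists_eq_left', eq_comm]

def greedyCandidates (c : ℕ) (T : ℕ → ℕ → ℕ) (i j : ℕ) : Set ℕ :=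
  {t | t < c ∧ T i t ≤ T (i + 1) j ∧ ∀ j' < j, partnerCol c T i j' ≠ t}

theorem isGreatest_partnerCol_of_nonempty {j : ℕ} (hne : (greedyCandidates c T i j).Nonempty) :
    IsGreatest (greedyCandidates c T i j) (partnerCol c T i j) := by
  set L := (List.range c).filter
    (fun t => decide (T i t ≤ T (i + 1) j ∧ t ∉ partnerList c T i j))
  have hL : ∀ t, t ∈ L ↔ t ∈ greedyCandidates c T i j := by
    simp [L, greedyCandidates, mem_partnerList]
  obtain ⟨t, ht⟩ := hne
  have hLne : L ≠ [] := List.ne_nil_of_mem ((hL t).mpr ht)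
  rw [partnerCol_eq_foldr_max]
  exact ⟨(hL _).mp (List.maximum_mem (List.foldr_max_of_ne_nil hLne).symm),
    fun t' ht' => List.le_max_of_le ((hL t').mpr ht') le_rfl⟩

theorem greedyCandidates_nonempty (hT : IsRectSYT r c T) {j : ℕ} (hi : i + 1 < r) (hj : j < c) :
    (greedyCandidates c T i j).Nonempty := by
  have hcard : (partnerList c T i j).toFinset.card < (Finset.range (j + 1)).card := by
    simpa [partnerList_length] using (partnerList c T i j).toFinset_card_le
  obtain ⟨t, ht, hfree⟩ := Finset.exists_mem_notMem_of_card_lt_card hcard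
  rw [Finset.mem_range, Nat.lt_succ_iff] at ht
  rw [List.mem_toFinset, mem_partnerList, not_exists] at hfree
  exact ⟨t, by omega, (hT.row_le (by omega) ht hj).trans (hT.2.1 i j hi hj).le,
    fun j' hj' h => hfree j' ⟨hj', h⟩⟩

theorem IsRectSYT.isGreatest_partnerCol (hT : IsRectSYT r c T) {j : ℕ} (hi : i + 1 < r)
    (hj : j < c) : IsGreatest (greedyCandidates c T i j) (partnerCol c T i j) :=
  isGreatest_partnerCol_of_nonempty (greedyCandidates_nonempty hT hi hj)

theorem IsRectSYT.eq_of_partnerCol_eq (hT : IsRectSYT r c T) (hi : i + 1 < r) {j j' : ℕ}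
    (hj : j < c) (hj' : j' < c) (he : partnerCol c T i j = partnerCol c T i j') : j = j' := by
  rcases lt_trichotomy j j' with h | h | h
  · exact absurd he ((hT.isGreatest_partnerCol hi hj').1.2.2 j h)
  · exact h
  · exact absurd he.symm ((hT.isGreatest_partnerCol hi hj).1.2.2 j' h)

end GreedyMatching

/-- The cells `(i, s i + j)` with `i < r`, `j < w` form a subtableau `S` of `T` whose
content is `{k + 1, …, k + r * w}`. -/
structure IsConsecutiveBlock (r c w k : ℕ) (T : ℕ → ℕ → ℕ) (s : ℕ → ℕ) : Prop where
  fits : ∀ i, i < r → s i + w ≤ c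
  content : ∀ v, (k < v ∧ v ≤ k + r * w) ↔ ∃ i j, i < r ∧ j < w ∧ T i (s i + j) = v

namespace IsConsecutiveBlock

variable {r c w k : ℕ} {T : ℕ → ℕ → ℕ} {s : ℕ → ℕ}

theorem mem_content_iff (hS : IsConsecutiveBlock r c w k T s) (hT : IsRectSYT r c T)
    {i j : ℕ} (hi : i < r) (hj : j < c) :
    (k < T i j ∧ T i j ≤ k + r * w) ↔ s i ≤ j ∧ j < s i + w := by
  rw [hS.content]
  constructor
  · rintro ⟨i', j₀, hi', hj₀, he⟩
    obtain ⟨rfl, rfl⟩ := hT.eq_of_entry_eq hi' (by have := hS.fits i' hi'; omega) hi hj he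
    omega
  · rintro ⟨hj₁, hj₂⟩
    exact ⟨i, j - s i, hi, by omega, by rw [Nat.add_sub_cancel' hj₁]⟩

theorem entry_le_of_lt_start (hS : IsConsecutiveBlock r c w k T s) (hT : IsRectSYT r c T)
    (hw : 0 < w) {i j : ℕ} (hi : i < r) (hj : j < s i) : T i j ≤ k := by
  have hsc := hS.fits i hi
  have hlt : T i j < T i (s i) := hT.row_lt hi hj (by omega)
  have hS_start := (hS.mem_content_iff hT hi (j := s i) (by omega)).mpr ⟨le_rfl, by omega⟩
  by_contra! hk
  have := (hS.mem_content_iff hT hi (j := j) (by omega)).mp ⟨hk, by omega⟩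
  omega

theorem partnerCol_lt_start (hS : IsConsecutiveBlock r c w k T s) (hT : IsRectSYT r c T)
    (hw : 0 < w) {i j : ℕ} (hi : i + 1 < r) (hj : j < s (i + 1)) : partnerCol c T i j < s i := by
  have hsc := hS.fits i (by omega)
  obtain ⟨hpc, hpT, -⟩ :=
    (hT.isGreatest_partnerCol (j := j) hi (by have := hS.fits (i + 1) hi; omega)).1
  have hb : T (i + 1) j ≤ k := hS.entry_le_of_lt_start hT hw hi hj
  have hS_start := (hS.mem_content_iff hT (i := i) (j := s i) (by omega) (by omega)).mpr
    ⟨le_rfl, by omega⟩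
  by_contra! hge
  have : T i (s i) ≤ T i (partnerCol c T i j) := hT.row_le (by omega) hge hpc
  omega

theorem partnerCol_mem_block (hS : IsConsecutiveBlock r c w k T s) (hT : IsRectSYT r c T)
    (hcol : ∀ i j, i + 1 < r → j < w → T i (s i + j) < T (i + 1) (s (i + 1) + j))
    {i j : ℕ} (hi : i + 1 < r) (hj : s (i + 1) ≤ j ∧ j < s (i + 1) + w) :
    s i ≤ partnerCol c T i j ∧ partnerCol c T i j < s i + w := by
  obtain ⟨j₀, rfl⟩ := Nat.exists_eq_add_of_le hj.1
  have hw : 0 < w := by omega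
  have hsc := hS.fits i (by omega)
  have hsc' := hS.fits (i + 1) hi
  have hp := hT.isGreatest_partnerCol (j := s (i + 1) + j₀) hi (by omega)
  -- Columns left of `S` in row `i + 1` are matched left of `S` in row `i`, so only the `j₀`
  -- earlier columns of `S` compete for the `j₀ + 1` columns `s i, …, s i + j₀`.
  have hcard : ((Finset.Ico (s (i + 1)) (s (i + 1) + j₀)).image (partnerCol c T i)).card <
      (Finset.Icc (s i) (s i + j₀)).card :=
    Finset.card_image_le.trans_lt (by simp; omega)
  obtain ⟨t, ht, hfree⟩ := Finset.exists_mem_notMem_of_card_lt_card hcard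
  rw [Finset.mem_Icc] at ht
  have ht_cand : t ∈ greedyCandidates c T i (s (i + 1) + j₀) := by
    refine ⟨by omega, (hT.row_le (by omega) ht.2 (by omega)).trans (hcol i j₀ hi (by omega)).le,
      fun j' hj' he => ?_⟩
    rcases lt_or_ge j' (s (i + 1)) with hl | hl
    · have := hS.partnerCol_lt_start hT hw hi hl
      omega
    · exact hfree (Finset.mem_image.mpr ⟨j', Finset.mem_Ico.mpr ⟨hl, hj'⟩, he⟩)
  have hlow : s i ≤ partnerCol c T i (s (i + 1) + j₀) := ht.1.trans (hp.2 ht_cand)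
  obtain ⟨hpc, hpT, -⟩ := hp.1
  have hb := (hS.mem_content_iff hT hi (by omega)).mpr hj
  have hstart := (hS.mem_content_iff hT (i := i) (j := s i) (by omega) (by omega)).mpr
    ⟨le_rfl, by omega⟩
  have hrow : T i (s i) ≤ T i (partnerCol c T i (s (i + 1) + j₀)) :=
    hT.row_le (by omega) hlow hpc
  exact (hS.mem_content_iff hT (by omega) hpc).mp ⟨by omega, by omega⟩

theorem partnerCol_notMem_block (hS : IsConsecutiveBlock r c w k T s) (hT : IsRectSYT r c T)
    (hcol : ∀ i j, i + 1 < r → j < w → T i (s i + j) < T (i + 1) (s (i + 1) + j))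
    {i j : ℕ} (hi : i + 1 < r) (hj : s (i + 1) + w ≤ j) (hjc : j < c) :
    partnerCol c T i j < s i ∨ s i + w ≤ partnerCol c T i j := by
  by_contra! hp
  -- The `w` columns of `S` in row `i + 1` already use up the `w` columns of `S` in row `i`.
  obtain ⟨t, ht, he⟩ := Finset.surj_on_of_inj_on_of_card_le
    (s := Finset.range w) (t := Finset.Ico (s i) (s i + w))
    (fun t _ => partnerCol c T i (s (i + 1) + t))
    (fun t ht => Finset.mem_Ico.mpr
      (hS.partnerCol_mem_block hT hcol hi ⟨by omega, by simp at ht; omega⟩))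
    (fun t₁ t₂ ht₁ ht₂ he => by
      simp only [Finset.mem_range] at ht₁ ht₂
      have := hT.eq_of_partnerCol_eq hi (by omega) (by omega) he
      omega)
    (by simp) (partnerCol c T i j) (Finset.mem_Ico.mpr hp)
  rw [Finset.mem_range] at ht
  have := hT.eq_of_partnerCol_eq hi hjc (by omega) he
  omega

end IsConsecutiveBlock

theorem arc_endpoints_in_subtableau_general (r c w k : ℕ) (T : ℕ → ℕ → ℕ) (s : ℕ → ℕ)
    (hT : IsRectSYT r c T)
    (hfit : ∀ i, i < r → s i + w ≤ c)
    (hcontent : ∀ v, (k < v ∧ v ≤ k + r * w) ↔ ∃ i j, i < r ∧ j < w ∧ T i (s i + j) = v)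
    (hcol : ∀ i j, i + 1 < r → j < w → T i (s i + j) < T (i + 1) (s (i + 1) + j)) :
    ∀ a b : ℕ, (a, b) ∈ mDiagram r c T →
      ((k < a ∧ a ≤ k + r * w) ∨ (k < b ∧ b ≤ k + r * w)) →
      ((k < a ∧ a ≤ k + r * w) ∧ (k < b ∧ b ≤ k + r * w)) := by
  intro a b hab hend
  simp only [mDiagram, Finset.mem_image, Finset.mem_product, Finset.mem_range,
    Prod.mk.injEq] at hab
  obtain ⟨⟨i, j⟩, ⟨hi, hj⟩, rfl, rfl⟩ := hab
  dsimp only at hi hj hend ⊢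
  have hi : i + 1 < r := by omega
  have hw : 0 < w := Nat.pos_of_ne_zero (by rintro rfl; omega)
  have hS : IsConsecutiveBlock r c w k T s := ⟨hfit, hcontent⟩
  have hpc := (hT.isGreatest_partnerCol hi hj).1.1
  rw [hS.mem_content_iff hT (by omega) hpc, hS.mem_content_iff hT hi hj] at hend ⊢
  rcases lt_or_ge j (s (i + 1)) with hleft | hstart
  · have := hS.partnerCol_lt_start hT hw hi hleft
    omega
  rcases lt_or_ge j (s (i + 1) + w) with hinside | hright
  · exact ⟨hS.partnerCol_mem_block hT hcol hi ⟨hstart, hinside⟩, hstart, hinside⟩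
  · have := hS.partnerCol_notMem_block hT hcol hi hright hj
    omega

/-- Lemma (endpoints in `S`).  Let `T` be an `r × c` rectangular SYT and `S` a
uniformly proper rectangular subtableau of `T`, occupying in each row `i` the
columns `s i, …, s i + w - 1`, with content the consecutive integers
`{k+1, …, k+r*w}` and with strictly increasing columns after left-justification.
If an arc of `φ(T)` has an endpoint among the entries of `S`, then both its
endpoints are entries of `S`. -/
theorem arc_endpoints_in_subtableau (r c w k : ℕ) (T : ℕ → ℕ → ℕ) (s : ℕ → ℕ)
    (hr : 0 < r) (hT : IsRectSYT r c T)
    (hw : 0 < w) (hwc : w < c)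
    (hfit : ∀ i, i < r → s i + w ≤ c)
    (hmono : ∀ i, i + 1 < r → s (i + 1) ≤ s i)
    (hcontent : ∀ v, (k < v ∧ v ≤ k + r * w) ↔ ∃ i j, i < r ∧ j < w ∧ T i (s i + j) = v)
    (hcol : ∀ i j, i + 1 < r → j < w → T i (s i + j) < T (i + 1) (s (i + 1) + j)) :
    ∀ a b : ℕ, (a, b) ∈ mDiagram r c T →
      ((k < a ∧ a ≤ k + r * w) ∨ (k < b ∧ b ≤ k + r * w)) →
      ((k < a ∧ a ≤ k + r * w) ∧ (k < b ∧ b ≤ k + r * w)) :=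
  arc_endpoints_in_subtableau_general r c w k T s hT hfit hcontent hcol
end

section
/- Let T be a rectangular standard Young tableau with uniformly proper rectangular subtableau S, written T = T_1 S T_2 with T_1 nonempty. Then P(T) = T_1' S' T_2' where S' is a uniformly proper rectangular subtableau of P(T) obtained from S by decrementing every entry by 1 (hence uniformly equivalent to S), and T_1' T_2' is equivalent to P(T_1 T_2). -/
/-- Delete the `w` columns of the subtableau starting at column `s i` in each row:
the horizontal concatenation `T₁ T₂`. -/
def delCols (A : ℕ → ℕ → ℕ) (s : ℕ → ℕ) (w : ℕ) : ℕ → ℕ → ℕ :=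
  fun i j => if j < s i then A i j else A i (j + w)

/-- Standardization of an `r × c` filling: relabel the entries order-preservingly by
`1, …, r*c`. -/
def stdFill (r c : ℕ) (A : ℕ → ℕ → ℕ) : ℕ → ℕ → ℕ :=
  fun i j => (((Finset.range r) ×ˢ (Finset.range c)).filter
    (fun p => A p.1 p.2 ≤ A i j)).card

/-- Two `r × c` fillings (with distinct entries) are equivalent: they coincide after
relabeling the entries of each order-preservingly by `1, …, r*c`. -/
def EquivFilling (r c : ℕ) (A B : ℕ → ℕ → ℕ) : Prop :=
  ∀ i j i' j', i < r → j < c → i' < r → j' < c → (A i j < A i' j' ↔ B i j < B i' j')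

/-
The sliding path of promotion reaches the band `S` from the left by a horizontal move in some
row `i₀`: the entries of `T₁` lie below the content of `S`, those of `T₂` above it, and the
columns of `S` increase. It then crosses `S` horizontally and afterwards stays to the right of
`S`. So the entries of `S` in row `i₀` move one box left, the rest of `S` is untouched, and
deleting the columns of `S` turns the sliding path of `T` into that of `T₁ T₂` with the
crossing cut out; away from `S`, promotion of `T` is promotion of `T₁ T₂` up to relabeling.
-/

section Slide

variable {r c : ℕ} {A B : ℕ → ℕ → ℕ} {i j m : ℕ}

theorem slideNext_cases (r c : ℕ) (A : ℕ → ℕ → ℕ) (i j : ℕ) :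
    (slideNext r c A (i, j) = (i, j + 1) ∧ j + 1 < c ∧
      (i + 1 < r → A i (j + 1) ≤ A (i + 1) j)) ∨
    (slideNext r c A (i, j) = (i + 1, j) ∧ i + 1 < r ∧
      (j + 1 < c → A (i + 1) j < A i (j + 1))) ∨
    (slideNext r c A (i, j) = (i, j) ∧ ¬ i + 1 < r ∧ ¬ j + 1 < c) := by
  unfold slideNext
  by_cases h1 : i + 1 < r <;> by_cases h2 : j + 1 < c
  · by_cases h3 : A i (j + 1) ≤ A (i + 1) j
    · simp [h1, h2, h3]
    · simp [h1, h2, h3, lt_of_not_ge h3]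
  all_goals simp [h1, h2]

theorem slideNext_of_right (hj : j + 1 < c) (h : i + 1 < r → A i (j + 1) ≤ A (i + 1) j) :
    slideNext r c A (i, j) = (i, j + 1) := by
  unfold slideNext
  by_cases hi : i + 1 < r <;> simp [hi, hj, h]

theorem slideNext_of_down (hi : i + 1 < r) (h : j + 1 < c → A (i + 1) j < A i (j + 1)) :
    slideNext r c A (i, j) = (i + 1, j) := by
  unfold slideNext
  by_cases hj : j + 1 < c
  · simp [hi, hj, not_le.mpr (h hj)]
  · simp [hi, hj]

/-- Sliding commutes with deleting `d` columns to the left of the window, as long as the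
comparison inside the `2 × 2` window is the same. -/
theorem slideNext_add_col (d : ℕ)
    (hcmp : i + 1 < r → j + 1 < c →
      (B i (j + 1) ≤ B (i + 1) j ↔ A i (j + 1 + d) ≤ A (i + 1) (j + d))) :
    slideNext r (c + d) A (i, j + d) =
      ((slideNext r c B (i, j)).1, (slideNext r c B (i, j)).2 + d) := by
  unfold slideNext
  simp only [show j + d + 1 = j + 1 + d by omega, Nat.add_lt_add_iff_right]
  by_cases h1 : i + 1 < r <;> by_cases h2 : j + 1 < c
  · simp only [h1, h2, and_self, ↓reduceIte, hcmp]
    split_ifs <;> rfl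
  all_goals simp [h1, h2]

theorem slidePath_succ (n : ℕ) : slidePath r c A (n + 1) = slideNext r c A (slidePath r c A n) :=
  rfl

theorem slidePath_lt (hr : 0 < r) (hc : 0 < c) (m : ℕ) :
    (slidePath r c A m).1 < r ∧ (slidePath r c A m).2 < c := by
  induction m with
  | zero => exact ⟨hr, hc⟩
  | succ n ih =>
    rcases slideNext_cases r c A (slidePath r c A n).1 (slidePath r c A n).2 with
      ⟨h, hb, -⟩ | ⟨h, hb, -⟩ | ⟨h, -⟩ <;> rw [slidePath_succ, h] <;> omega

theorem slidePath_fst_add_snd (hr : 0 < r) (hc : 0 < c) (m : ℕ) :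
    (slidePath r c A m).1 + (slidePath r c A m).2 = min m (r + c - 2) := by
  induction m with
  | zero => simp [slidePath]
  | succ n ih =>
    have := slidePath_lt (A := A) hr hc n
    rcases slideNext_cases r c A (slidePath r c A n).1 (slidePath r c A n).2 with
      ⟨h, hb, -⟩ | ⟨h, hb, -⟩ | ⟨h, hb1, hb2⟩ <;> rw [slidePath_succ, h] <;> dsimp only <;> omega

theorem slidePath_of_le (hr : 0 < r) (hc : 0 < c) (h : r + c - 2 ≤ m) :
    slidePath r c A m = (r - 1, c - 1) := by
  have := slidePath_lt (A := A) hr hc m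
  have := slidePath_fst_add_snd (A := A) hr hc m
  ext <;> dsimp only <;> omega

theorem slidePath_eq_add (hr : 0 < r) (hc : 0 < c) (h : slidePath r c A m = (i, j))
    (hne : (i, j) ≠ (r - 1, c - 1)) : m = i + j := by
  have hlt := slidePath_lt (A := A) hr hc m
  have hsum := slidePath_fst_add_snd (A := A) hr hc m
  rw [h] at hlt hsum
  simp only [ne_eq, Prod.mk.injEq] at hne hlt hsum
  omega

theorem promote_of_slidePath_eq (hr : 0 < r) (hc : 0 < c) (h : slidePath r c A m = (i, j))
    (hne : (i, j) ≠ (r - 1, c - 1)) :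
    promote r c A i j = A (slidePath r c A (m + 1)).1 (slidePath r c A (m + 1)).2 - 1 := by
  have hex : ∃ n, slidePath r c A n = (i, j) := ⟨m, h⟩
  have hfind : Nat.find hex = m :=
    (slidePath_eq_add hr hc (Nat.find_spec hex) hne).trans (slidePath_eq_add hr hc h hne).symm
  unfold promote
  rw [if_neg (by rw [slidePath_of_le hr hc (by omega)]; exact hne), dif_pos hex, hfind]

theorem promote_of_forall_ne (h : ∀ m, slidePath r c A m ≠ (i, j)) :
    promote r c A i j = A i j - 1 := by
  unfold promote
  rw [if_neg (fun e => h _ e.symm), dif_neg (not_exists.mpr h)]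

theorem promote_last (hr : 0 < r) (hc : 0 < c) : promote r c A (r - 1) (c - 1) = r * c := by
  unfold promote
  rw [if_pos (slidePath_of_le hr hc (by omega)).symm]

end Slide

section Standardize

variable {r c : ℕ} {A : ℕ → ℕ → ℕ} {i j i' j' : ℕ}

theorem stdFill_le_iff (hi : i < r) (hj : j < c) :
    stdFill r c A i j ≤ stdFill r c A i' j' ↔ A i j ≤ A i' j' := by
  have mono : ∀ {v v' : ℕ}, v ≤ v' → ((Finset.range r ×ˢ Finset.range c).filter
      fun p => A p.1 p.2 ≤ v) ⊆ (Finset.range r ×ˢ Finset.range c).filter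
      fun p => A p.1 p.2 ≤ v' := fun hv p hp => by
    simp only [Finset.mem_filter] at hp ⊢
    exact ⟨hp.1, hp.2.trans hv⟩
  refine ⟨fun h => ?_, fun h => Finset.card_le_card (mono h)⟩
  by_contra hlt
  rw [not_le] at hlt
  refine (Finset.card_lt_card ((Finset.ssubset_iff_of_subset (mono hlt.le)).mpr
    ⟨(i, j), ?_, ?_⟩)).not_ge h
  · simp [hi, hj]
  · simp [hlt]

theorem equivFilling_stdFill : EquivFilling r c A (stdFill r c A) := by
  intro i j i' j' hi hj hi' hj'
  rw [← not_le, ← not_le, stdFill_le_iff hi' hj']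

theorem one_le_stdFill (hi : i < r) (hj : j < c) : 1 ≤ stdFill r c A i j :=
  Finset.card_pos.mpr ⟨(i, j), by simp [hi, hj]⟩

theorem stdFill_le_mul : stdFill r c A i j ≤ r * c :=
  (Finset.card_filter_le _ _).trans (by simp)

theorem slidePath_stdFill (hr : 0 < r) (hc : 0 < c) :
    slidePath r c (stdFill r c A) = slidePath r c A := by
  funext m
  induction m with
  | zero => rfl
  | succ n ih =>
    have hlt := slidePath_lt (A := A) hr hc n
    rw [slidePath_succ, slidePath_succ, ih]
    simpa using slideNext_add_col (r := r) (c := c) (A := stdFill r c A) (B := A) 0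
      fun _ h2 => (stdFill_le_iff hlt.1 h2).symm

theorem equivFilling_of_eq_pred {A B U V : ℕ → ℕ → ℕ} (hUV : EquivFilling r c U V)
    (hU : ∀ a b, a < r → b < c → U a b ∈ Set.Icc 1 (A (r - 1) (c - 1)))
    (hV : ∀ a b, a < r → b < c → V a b ∈ Set.Icc 1 (B (r - 1) (c - 1)))
    (h : ∀ i j, i < r → j < c → (i, j) ≠ (r - 1, c - 1) →
      ∃ a b, a < r ∧ b < c ∧ A i j = U a b - 1 ∧ B i j = V a b - 1) :
    EquivFilling r c A B := by
  intro i j i' j' hi hj hi' hj'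
  by_cases hx : (i, j) = (r - 1, c - 1) <;> by_cases hy : (i', j') = (r - 1, c - 1)
  · simp only [Prod.mk.injEq] at hx hy
    rw [hx.1, hx.2, hy.1, hy.2, lt_self_iff_false, lt_self_iff_false]
  · obtain ⟨a, b, ha, hb, hA, hB⟩ := h i' j' hi' hj' hy
    simp only [Prod.mk.injEq] at hx
    obtain ⟨_, _⟩ := hU a b ha hb
    obtain ⟨_, _⟩ := hV a b ha hb
    rw [hx.1, hx.2, hA, hB]
    omega
  · obtain ⟨a, b, ha, hb, hA, hB⟩ := h i j hi hj hx
    simp only [Prod.mk.injEq] at hy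
    obtain ⟨_, _⟩ := hU a b ha hb
    obtain ⟨_, _⟩ := hV a b ha hb
    rw [hy.1, hy.2, hA, hB]
    omega
  · obtain ⟨a, b, ha, hb, hA, hB⟩ := h i j hi hj hx
    obtain ⟨a', b', ha', hb', hA', hB'⟩ := h i' j' hi' hj' hy
    have := hUV a b a' b' ha hb ha' hb'
    obtain ⟨_, _⟩ := hU a b ha hb
    obtain ⟨_, _⟩ := hU a' b' ha' hb'
    obtain ⟨_, _⟩ := hV a b ha hb
    obtain ⟨_, _⟩ := hV a' b' ha' hb'
    rw [hA, hB, hA', hB']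
    omega

end Standardize

section DeleteColumns

variable {r c w : ℕ} {T : ℕ → ℕ → ℕ} {s : ℕ → ℕ} {a b : ℕ}

theorem delCols_of_lt (h : b < s a) : delCols T s w a b = T a b := if_pos h

theorem delCols_of_le (h : s a ≤ b) : delCols T s w a b = T a (b + w) := if_neg (not_lt.mpr h)

theorem slideNext_delCols_shift (hw : w ≤ c) (ha : s a ≤ b + 1) (ha' : a + 1 < r → s (a + 1) ≤ b) :
    slideNext r c T (a, b + w) =
      ((slideNext r (c - w) (delCols T s w) (a, b)).1,
        (slideNext r (c - w) (delCols T s w) (a, b)).2 + w) := by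
  have := slideNext_add_col (r := r) (c := c - w) (A := T) (B := delCols T s w) (i := a) (j := b) w
    fun h1 _ => by rw [delCols_of_le ha, delCols_of_le (ha' h1)]
  rwa [Nat.sub_add_cancel hw] at this

/-- Deleting columns only replaces a neighbour by a larger entry of its row. -/
theorem slideNext_delCols_of_lt (hw : 0 < w)
    (hrow : ∀ i j j', i < r → j ≤ j' → j' < c → T i j ≤ T i j')
    (hfits : ∀ i, i < r → s i + w ≤ c) (ha : a < r) (hb : b < s a)
    (hnext : (slideNext r c T (a, b)).2 < s (slideNext r c T (a, b)).1) :
    slideNext r (c - w) (delCols T s w) (a, b) = slideNext r c T (a, b) := by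
  have le_delCols : ∀ i j, i < r → j < c - w → T i j ≤ delCols T s w i j := fun i j hi hj => by
    unfold delCols
    split_ifs
    exacts [le_rfl, hrow i j (j + w) hi (by omega) (by omega)]
  have hsa := hfits a ha
  rcases slideNext_cases r c T a b with ⟨h, -, hcmp⟩ | ⟨h, hi, hcmp⟩ | ⟨h, -, hj⟩ <;>
    simp only [h] at hnext ⊢
  · refine slideNext_of_right (by omega) fun h1 => ?_
    rw [delCols_of_lt hnext]
    exact (hcmp h1).trans (le_delCols _ _ h1 (by omega))
  · refine slideNext_of_down hi fun h2 => ?_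
    rw [delCols_of_lt hnext]
    exact (hcmp (by omega)).trans_le (le_delCols _ _ (by omega) h2)
  · omega

end DeleteColumns

section Tableau

variable {r c : ℕ} {T : ℕ → ℕ → ℕ} {i j i' j' : ℕ}

theorem IsRectSYT.row_lt_s8 (hT : IsRectSYT r c T) (hi : i < r) (hj : j < j') (hj' : j' < c) :
    T i j < T i j' := by
  induction j', hj using Nat.le_induction with
  | base => exact hT.1 i j hi hj'
  | succ n _ ih => exact (ih (by omega)).trans (hT.1 i n hi hj')

theorem IsRectSYT.row_le_s8 (hT : IsRectSYT r c T) (hi : i < r) (hj : j ≤ j') (hj' : j' < c) :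
    T i j ≤ T i j' := by
  rcases hj.eq_or_lt with rfl | hlt
  exacts [le_rfl, (hT.row_lt_s8 hi hlt hj').le]

/-- The entries of `T` fill `{1, …, r * c}`, so by counting they are distinct. -/
theorem IsRectSYT.eq_of_eq (hT : IsRectSYT r c T) (hi : i < r) (hj : j < c) (hi' : i' < r)
    (hj' : j' < c) (h : T i j = T i' j') : i = i' ∧ j = j' := by
  have key := Finset.inj_on_of_surj_on_of_card_le
    (s := Finset.range r ×ˢ Finset.range c) (t := Finset.Icc 1 (r * c)) (fun p _ => T p.1 p.2)
    (fun p hp => by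
      simp only [Finset.mem_product, Finset.mem_range] at hp
      exact Finset.mem_Icc.mpr (hT.2.2.1 p.1 p.2 hp.1 hp.2))
    (fun v hv => by
      obtain ⟨a, b, ha, hb, hab⟩ := hT.2.2.2 v (Finset.mem_Icc.mp hv).1 (Finset.mem_Icc.mp hv).2
      exact ⟨(a, b), by simp [ha, hb], hab⟩)
    (by simp) (a₁ := (i, j)) (by simp [hi, hj]) (a₂ := (i', j')) (by simp [hi', hj']) h
  exact Prod.mk.inj key

end Tableau

/-- `T` is an `r × c` standard Young tableau containing a band `S` of width `w` that starts
at column `s i` in row `i`, uniformly equivalent to a standard Young tableau with content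
`{k + 1, …, k + r * w}`, and with a nonempty part `T₁` to its left. -/
structure HasUniformBand (r c w k : ℕ) (T : ℕ → ℕ → ℕ) (s : ℕ → ℕ) : Prop where
  rows_pos : 0 < r
  isRectSYT : IsRectSYT r c T
  width_pos : 0 < w
  width_lt : w < c
  fits : ∀ i, i < r → s i + w ≤ c
  offset_succ_le : ∀ i, i + 1 < r → s (i + 1) ≤ s i
  offset_zero_pos : 0 < s 0
  content : ∀ v, (k < v ∧ v ≤ k + r * w) ↔ ∃ i j, i < r ∧ j < w ∧ T i (s i + j) = v
  band_lt_succ : ∀ i j, i + 1 < r → j < w → T i (s i + j) < T (i + 1) (s (i + 1) + j)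

noncomputable def entryStep (r c : ℕ) (T : ℕ → ℕ → ℕ) (s : ℕ → ℕ) : ℕ :=
  sInf {m | s (slidePath r c T m).1 ≤ (slidePath r c T m).2}

noncomputable def entryRow (r c : ℕ) (T : ℕ → ℕ → ℕ) (s : ℕ → ℕ) : ℕ :=
  (slidePath r c T (entryStep r c T s)).1

namespace HasUniformBand

variable {r c w k : ℕ} {T : ℕ → ℕ → ℕ} {s : ℕ → ℕ} {i j m t : ℕ}

local notation "K" => entryStep r c T s
local notation "i₀" => entryRow r c T s
local notation "τ" => slidePath r c T
local notation "υ" => slidePath r (c - w) (delCols T s w)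
local notation "σ" => Function.update s i₀ (s i₀ - 1)

theorem cols_pos (hB : HasUniformBand r c w k T s) : 0 < c := hB.width_pos.trans hB.width_lt

theorem mem_band (hB : HasUniformBand r c w k T s) (hi : i < r) (ht : t < w) :
    k < T i (s i + t) ∧ T i (s i + t) ≤ k + r * w :=
  (hB.content _).mpr ⟨i, t, hi, ht, rfl⟩

theorem offset_le_of_mem_band (hB : HasUniformBand r c w k T s) (hi : i < r) (hj : j < c)
    (hk : k < T i j) (hk' : T i j ≤ k + r * w) : s i ≤ j ∧ j < s i + w := by
  obtain ⟨a, b, ha, hb, hab⟩ := (hB.content (T i j)).mp ⟨hk, hk'⟩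
  have := hB.fits a ha
  obtain ⟨rfl, rfl⟩ := hB.isRectSYT.eq_of_eq ha (by omega) hi hj hab
  omega

theorem le_of_lt_offset (hB : HasUniformBand r c w k T s) (hi : i < r) (hj : j < s i) :
    T i j ≤ k := by
  have := hB.fits i hi
  have := hB.width_pos
  have hlt := hB.isRectSYT.row_lt_s8 hi (hj.trans_eq (add_zero _).symm) (by omega : s i + 0 < c)
  have := hB.mem_band hi hB.width_pos
  by_contra! hkj
  have := hB.offset_le_of_mem_band hi (by omega) hkj (by omega)
  omega

theorem lt_of_offset_le (hB : HasUniformBand r c w k T s) (hi : i < r) (hj : s i ≤ j)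
    (hjc : j < c) : k < T i j := by
  have := hB.isRectSYT.row_le_s8 hi (by omega : s i + 0 ≤ j) hjc
  have := hB.mem_band hi hB.width_pos
  omega

theorem lt_of_offset_add_le (hB : HasUniformBand r c w k T s) (hi : i < r) (hj : s i + w ≤ j)
    (hjc : j < c) : k + r * w < T i j := by
  have hw := hB.width_pos
  have hlt := hB.isRectSYT.row_lt_s8 hi (by omega : s i + (w - 1) < j) hjc
  have := hB.mem_band hi (by omega : w - 1 < w)
  by_contra! hkj
  have := hB.offset_le_of_mem_band hi hjc (by omega) hkj
  omega

theorem band_lt_of_le (hB : HasUniformBand r c w k T s) (hi : i + 1 < r) (ht : t < w)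
    (hj : s (i + 1) + t ≤ j) (hjc : j < c) : T i (s i + t) < T (i + 1) j := by
  have := hB.fits i (by omega)
  rcases lt_or_ge j (s (i + 1) + w) with hin | hout
  · have hle := hB.isRectSYT.row_le_s8 (i := i) (by omega) (by omega : s i + t ≤ s i + (j - s (i + 1)))
      (by omega)
    have hlt := hB.band_lt_succ i (j - s (i + 1)) hi (by omega)
    rw [Nat.add_sub_cancel' (by omega)] at hlt
    exact hle.trans_lt hlt
  · have := hB.lt_of_offset_add_le hi hout hjc
    have := hB.mem_band (by omega : i < r) ht
    omega

/-- Where the sliding path of `T` first meets the band, it moves right into it. -/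
theorem lt_below_of_offset_le (hB : HasUniformBand r c w k T s) (hi : i + 1 < r)
    (hj : j + 1 ≤ s i) (hj' : s (i + 1) ≤ j) : T i (j + 1) < T (i + 1) j := by
  have := hB.fits i (by omega)
  have := hB.width_pos
  rcases hj.lt_or_eq with hlt | heq
  · exact (hB.le_of_lt_offset (by omega) hlt).trans_lt (hB.lt_of_offset_le hi hj' (by omega))
  · have := hB.band_lt_of_le hi hB.width_pos (by omega : s (i + 1) + 0 ≤ j) (by omega)
    rwa [add_zero, ← heq] at this


theorem entryStep_spec (hB : HasUniformBand r c w k T s) : s (τ K).1 ≤ (τ K).2 := by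
  suffices K ∈ {m | s (τ m).1 ≤ (τ m).2} from this
  refine Nat.sInf_mem ⟨r + c - 2, ?_⟩
  have := hB.fits (r - 1) (by have := hB.rows_pos; omega)
  have := hB.width_pos
  simp only [Set.mem_ofPred_eq, slidePath_of_le hB.rows_pos hB.cols_pos le_rfl]
  omega

theorem lt_offset_of_lt_entryStep (hm : m < K) : (τ m).2 < s (τ m).1 :=
  not_le.mp (Nat.notMem_of_lt_sInf (s := {m | s (τ m).1 ≤ (τ m).2}) hm)

theorem entryStep_pos (hB : HasUniformBand r c w k T s) : 0 < K := by
  by_contra! h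
  have hspec := hB.entryStep_spec
  rw [Nat.le_zero.mp h] at hspec
  exact absurd hspec (not_le.mpr hB.offset_zero_pos)

theorem slidePath_entryStep (hB : HasUniformBand r c w k T s) :
    τ (K - 1) = (i₀, s i₀ - 1) ∧ τ K = (i₀, s i₀) := by
  have hK := hB.entryStep_pos
  obtain ⟨a, b, hab⟩ : ∃ a b, τ (K - 1) = (a, b) := ⟨_, _, rfl⟩
  have hb : (τ (K - 1)).2 < s (τ (K - 1)).1 := lt_offset_of_lt_entryStep (by omega)
  have ha : (τ (K - 1)).1 < r := (slidePath_lt hB.rows_pos hB.cols_pos (K - 1)).1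
  simp only [hab] at hb ha
  have hstep : τ K = slideNext r c T (a, b) := by
    rw [← hab, ← slidePath_succ, Nat.sub_add_cancel hK]
  have hspec := hB.entryStep_spec
  have := hB.fits a ha
  have := hB.width_pos
  rcases slideNext_cases r c T a b with ⟨h, -, -⟩ | ⟨h, ha', hcmp⟩ | ⟨h, -⟩ <;>
    rw [h] at hstep <;> simp only [hstep] at hspec
  · have hi₀ : i₀ = a := by rw [entryRow, hstep]
    simp only [hi₀, hstep, hab, Prod.mk.injEq, true_and]
    omega
  · exact absurd (hcmp (by omega)) (hB.lt_below_of_offset_le ha' (by omega) hspec).not_gt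
  · omega

theorem entryRow_lt (hB : HasUniformBand r c w k T s) : i₀ < r := by
  have := (slidePath_lt (A := T) hB.rows_pos hB.cols_pos K).1
  rwa [hB.slidePath_entryStep.2] at this

theorem offset_entryRow_pos (hB : HasUniformBand r c w k T s) : 0 < s i₀ := by
  have : (τ (K - 1)).2 < s (τ (K - 1)).1 :=
    lt_offset_of_lt_entryStep (by have := hB.entryStep_pos; omega)
  rw [hB.slidePath_entryStep.1] at this
  exact Nat.zero_lt_of_lt this

theorem entryStep_eq (hB : HasUniformBand r c w k T s) : K = i₀ + s i₀ := by
  have := hB.fits _ hB.entryRow_lt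
  have := hB.offset_entryRow_pos
  have := hB.entryStep_pos
  have := hB.width_pos
  have := slidePath_eq_add hB.rows_pos hB.cols_pos hB.slidePath_entryStep.1
    (by simp only [ne_eq, Prod.mk.injEq]; omega)
  omega

theorem offset_succ_lt_entryRow (hB : HasUniformBand r c w k T s) (hi : i₀ + 1 < r) :
    s (i₀ + 1) < s i₀ := by
  obtain ⟨h1, h2⟩ := hB.slidePath_entryStep
  have hpos := hB.offset_entryRow_pos
  have := hB.width_pos
  have hstep : slideNext r c T (i₀, s i₀ - 1) = (i₀, s i₀) := by
    rw [← h1, ← slidePath_succ, Nat.sub_add_cancel hB.entryStep_pos, h2]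
  rcases slideNext_cases r c T i₀ (s i₀ - 1) with ⟨-, -, hcmp⟩ | ⟨h, -⟩ | ⟨h, -⟩
  · by_contra! hle
    have := hB.le_of_lt_offset hi (by omega : s i₀ - 1 < s (i₀ + 1))
    have := hB.lt_of_offset_le (i := i₀) (j := s i₀ - 1 + 1) (by omega) (by omega)
      (by have := hB.fits _ hB.entryRow_lt; omega)
    have := hcmp hi
    omega
  all_goals rw [hstep, Prod.mk.injEq] at h; omega

theorem slidePath_entryStep_add (hB : HasUniformBand r c w k T s) (ht : t ≤ w) :
    τ (K - 1 + t) = (i₀, s i₀ - 1 + t) := by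
  induction t with
  | zero => exact hB.slidePath_entryStep.1
  | succ t ih =>
    have := hB.fits _ hB.entryRow_lt
    have := hB.offset_entryRow_pos
    rw [← add_assoc, slidePath_succ, ih (by omega), ← add_assoc]
    refine slideNext_of_right (by omega) fun hi => ?_
    have := hB.offset_succ_lt_entryRow hi
    have := hB.band_lt_of_le hi (t := t) (j := s i₀ - 1 + t) (by omega) (by omega) (by omega)
    rw [show s i₀ - 1 + t + 1 = s i₀ + t by omega]
    exact this.le

theorem slidePath_delCols_of_lt (hB : HasUniformBand r c w k T s) (hm : m < K) : υ m = τ m := by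
  induction m with
  | zero => rfl
  | succ n ih =>
    rw [slidePath_succ, slidePath_succ, ih (by omega)]
    exact slideNext_delCols_of_lt hB.width_pos (fun _ _ _ hi => hB.isRectSYT.row_le_s8 hi) hB.fits
      (slidePath_lt hB.rows_pos hB.cols_pos n).1 (lt_offset_of_lt_entryStep (by omega))
      (lt_offset_of_lt_entryStep hm)

theorem slidePath_delCols_entryStep (hB : HasUniformBand r c w k T s) :
    υ (K - 1) = (i₀, s i₀ - 1) :=
  (hB.slidePath_delCols_of_lt (by have := hB.entryStep_pos; omega)).trans
    hB.slidePath_entryStep.1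

theorem slidePath_delCols_of_entryStep_le (hB : HasUniformBand r c w k T s) (hm : K - 1 ≤ m) :
    υ m = (i₀, s i₀ - 1) ∨ s (υ m).1 ≤ (υ m).2 := by
  induction m, hm using Nat.le_induction with
  | base => exact Or.inl hB.slidePath_delCols_entryStep
  | succ n _ ih =>
    obtain ⟨a, b, hab⟩ : ∃ a b, υ n = (a, b) := ⟨_, _, rfl⟩
    rw [hab] at ih
    rw [slidePath_succ, hab]
    rcases slideNext_cases r (c - w) (delCols T s w) a b with ⟨h, -⟩ | ⟨h, ha, -⟩ | ⟨h, -⟩ <;>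
      rw [h]
    · right
      rcases ih with h' | h' <;> simp only [Prod.mk.injEq] at h' ⊢
      · obtain ⟨rfl, rfl⟩ := h'
        omega
      · omega
    · right
      rcases ih with h' | h' <;> simp only [Prod.mk.injEq] at h' ⊢
      · obtain ⟨rfl, rfl⟩ := h'
        have := hB.offset_succ_lt_entryRow ha
        omega
      · exact (hB.offset_succ_le a ha).trans h'
    · exact ih

theorem slidePath_add_width (hB : HasUniformBand r c w k T s) (hm : K - 1 ≤ m) :
    τ (m + w) = ((υ m).1, (υ m).2 + w) := by
  induction m, hm using Nat.le_induction with
  | base => rw [hB.slidePath_delCols_entryStep, hB.slidePath_entryStep_add le_rfl]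
  | succ n hn ih =>
    rw [show n + 1 + w = n + w + 1 by omega, slidePath_succ, ih, slidePath_succ]
    refine slideNext_delCols_shift hB.width_lt.le ?_ fun ha => ?_ <;>
      rcases hB.slidePath_delCols_of_entryStep_le hn with h | h
    · simp only [h]
      omega
    · omega
    · rw [h] at ha ⊢
      exact Nat.le_sub_one_of_lt (hB.offset_succ_lt_entryRow ha)
    · exact (hB.offset_succ_le _ ha).trans h

theorem slidePath_trichotomy (hB : HasUniformBand r c w k T s) (n : ℕ) :
    (n < K ∧ τ n = υ n ∧ (τ n).2 < s (τ n).1) ∨ (∃ t < w, τ n = (i₀, s i₀ - 1 + t)) ∨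
      ∃ m, K - 1 ≤ m ∧ τ n = ((υ m).1, (υ m).2 + w) := by
  have hK := hB.entryStep_pos
  rcases lt_or_ge n K with h | h
  · exact Or.inl ⟨h, (hB.slidePath_delCols_of_lt h).symm, lt_offset_of_lt_entryStep h⟩
  rcases lt_or_ge n (K - 1 + w) with h' | h'
  · refine Or.inr (Or.inl ⟨n - (K - 1), by omega, ?_⟩)
    rw [← hB.slidePath_entryStep_add (by omega), Nat.add_sub_cancel' (by omega)]
  · refine Or.inr (Or.inr ⟨n - w, by omega, ?_⟩)
    rw [← hB.slidePath_add_width (by omega), Nat.sub_add_cancel (by omega)]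

theorem update_offset_le : σ i ≤ s i := by
  rw [Function.update_apply]
  split_ifs with h
  · rw [h]
    exact Nat.sub_le _ _
  · exact le_rfl

theorem update_offset_add_le (hB : HasUniformBand r c w k T s) (hi : i < r) : σ i + w ≤ c :=
  (Nat.add_le_add_right update_offset_le w).trans (hB.fits i hi)

theorem update_offset_succ_le (hB : HasUniformBand r c w k T s) (hi : i + 1 < r) :
    σ (i + 1) ≤ σ i := by
  have := hB.offset_succ_le i hi
  simp only [Function.update_apply]
  split_ifs with h1 h2 h2
  · omega
  · rw [← h1]
    omega
  · rw [h2] at hi ⊢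
    have := hB.offset_succ_lt_entryRow hi
    omega
  · exact this

theorem update_offset_last (hB : HasUniformBand r c w k T s) : σ (r - 1) + w ≤ c - 1 := by
  have hK := hB.entryStep_eq
  have := hB.entryRow_lt
  have := hB.fits _ hB.entryRow_lt
  have := hB.offset_entryRow_pos
  by_cases h : r - 1 = i₀
  · rw [h, Function.update_self]
    omega
  · rw [Function.update_of_ne h]
    have hlast := slidePath_of_le (A := delCols T s w) (m := r + (c - w) - 2) hB.rows_pos
      (by have := hB.width_lt; omega) le_rfl
    rcases hB.slidePath_delCols_of_entryStep_le (m := r + (c - w) - 2) (by omega) with h' | h' <;>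
      rw [hlast] at h'
    · exact absurd (Prod.mk.inj h').1 h
    · dsimp only at h'
      omega

theorem promote_update_offset_add (hB : HasUniformBand r c w k T s) (hi : i < r) (hj : j < w) :
    promote r c T i (σ i + j) = T i (s i + j) - 1 := by
  have := hB.fits _ hB.entryRow_lt
  have := hB.offset_entryRow_pos
  by_cases hi₀ : i = i₀
  · rw [hi₀, Function.update_self]
    have hcell := hB.slidePath_entryStep_add (t := j) (by omega)
    have hne : (i₀, s i₀ - 1 + j) ≠ (r - 1, c - 1) := by
      simp only [ne_eq, Prod.mk.injEq]
      omega
    rw [promote_of_slidePath_eq hB.rows_pos hB.cols_pos hcell hne, add_assoc,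
      hB.slidePath_entryStep_add (by omega)]
    congr 2
    omega
  · rw [Function.update_of_ne hi₀, promote_of_forall_ne]
    intro n hn
    rcases hB.slidePath_trichotomy n with ⟨-, -, h⟩ | ⟨t, -, h⟩ | ⟨m, hm, h⟩ <;> rw [hn] at h
    · dsimp only at h
      omega
    · exact hi₀ (Prod.mk.inj h).1
    · rcases hB.slidePath_delCols_of_entryStep_le hm with h' | h'
      · rw [h'] at h
        exact hi₀ (Prod.mk.inj h).1
      · obtain ⟨rfl, h⟩ := Prod.mk.inj h
        omega

theorem delCols_promote_of_slidePath_eq (hB : HasUniformBand r c w k T s) (hm : υ m = (i, j))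
    (hne : (i, j) ≠ (r - 1, c - w - 1)) :
    delCols (promote r c T) σ w i j = delCols T s w (υ (m + 1)).1 (υ (m + 1)).2 - 1 := by
  have hc : 0 < c - w := by have := hB.width_lt; omega
  have hm_eq := slidePath_eq_add hB.rows_pos hc hm hne
  have hlt := slidePath_lt (A := delCols T s w) hB.rows_pos hc m
  have hK := hB.entryStep_eq
  rw [hm] at hlt
  simp only [ne_eq, Prod.mk.injEq] at hne hlt
  rcases lt_or_ge (m + 1) K with hbefore | hafter
  · have hτ : τ m = (i, j) := (hB.slidePath_delCols_of_lt (by omega)).symm.trans hm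
    have hj : (τ m).2 < s (τ m).1 := lt_offset_of_lt_entryStep (by omega)
    simp only [hτ] at hj
    have hjσ : j < σ i := by
      rw [Function.update_apply]
      split_ifs with h
      · rw [h] at hj
        omega
      · exact hj
    have := hB.fits i hlt.1
    rw [delCols_of_lt hjσ, promote_of_slidePath_eq hB.rows_pos hB.cols_pos hτ
      (by simp only [ne_eq, Prod.mk.injEq]; omega), hB.slidePath_delCols_of_lt hbefore,
      delCols_of_lt (lt_offset_of_lt_entryStep hbefore)]
  · have hτ : τ (m + w) = (i, j + w) := by rw [hB.slidePath_add_width (by omega), hm]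
    have hjσ : σ i ≤ j := by
      rcases hB.slidePath_delCols_of_entryStep_le (m := m) (by omega) with h | h <;>
        rw [hm] at h
      · obtain ⟨rfl, rfl⟩ := Prod.mk.inj h
        rw [Function.update_self]
      · exact update_offset_le.trans h
    have hnext : s (υ (m + 1)).1 ≤ (υ (m + 1)).2 := by
      have hsum := slidePath_fst_add_snd (A := delCols T s w) hB.rows_pos hc (m + 1)
      refine (hB.slidePath_delCols_of_entryStep_le (m := m + 1) (by omega)).resolve_left
        fun h => ?_
      have := hB.offset_entryRow_pos
      simp only [h] at hsum
      omega
    rw [delCols_of_le hjσ, promote_of_slidePath_eq hB.rows_pos hB.cols_pos hτ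
      (by simp only [ne_eq, Prod.mk.injEq]; omega), show m + w + 1 = m + 1 + w by omega,
      hB.slidePath_add_width (by omega), delCols_of_le hnext]

theorem slidePath_ne_of_lt (hB : HasUniformBand r c w k T s) (h : ∀ m, υ m ≠ (i, j))
    (hj : j < σ i) (n : ℕ) : τ n ≠ (i, j) := by
  intro hn
  rcases hB.slidePath_trichotomy n with ⟨-, h', -⟩ | ⟨t, -, h'⟩ | ⟨m, hm, h'⟩ <;> rw [hn] at h'
  · exact h n h'.symm
  · obtain ⟨rfl, rfl⟩ := Prod.mk.inj h'
    rw [Function.update_self] at hj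
    omega
  · obtain ⟨rfl, rfl⟩ := Prod.mk.inj h'
    rcases hB.slidePath_delCols_of_entryStep_le hm with h'' | h''
    · simp only [h'', Function.update_self] at hj
      omega
    · have := update_offset_le (s := s) (r := r) (c := c) (T := T) (i := (υ m).1)
      omega

theorem slidePath_ne_add_width (hB : HasUniformBand r c w k T s) (h : ∀ m, υ m ≠ (i, j))
    (hj : s i ≤ j) (n : ℕ) : τ n ≠ (i, j + w) := by
  intro hn
  rcases hB.slidePath_trichotomy n with ⟨-, -, h'⟩ | ⟨t, ht, h'⟩ | ⟨m, -, h'⟩ <;> rw [hn] at h'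
  · dsimp only at h'
    omega
  · obtain ⟨rfl, h'⟩ := Prod.mk.inj h'
    omega
  · obtain ⟨h1, h2⟩ := Prod.mk.inj h'
    exact h m (Prod.ext h1.symm (by omega))

theorem delCols_promote_of_forall_ne (hB : HasUniformBand r c w k T s)
    (h : ∀ m, υ m ≠ (i, j)) : delCols (promote r c T) σ w i j = delCols T s w i j - 1 := by
  by_cases hj : j < σ i
  · rw [delCols_of_lt hj, delCols_of_lt (hj.trans_le update_offset_le),
      promote_of_forall_ne (hB.slidePath_ne_of_lt h hj)]
  · have hne₀ : (i, j) ≠ (i₀, s i₀ - 1) := fun e =>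
      h (K - 1) (hB.slidePath_delCols_entryStep.trans e.symm)
    have hjs : s i ≤ j := by
      rw [Function.update_apply] at hj
      split_ifs at hj with hi
      · rw [hi] at hne₀ ⊢
        simp only [ne_eq, Prod.mk.injEq, true_and] at hne₀
        omega
      · omega
    rw [delCols_of_le (not_lt.mp hj), delCols_of_le hjs,
      promote_of_forall_ne (hB.slidePath_ne_add_width h hjs)]

theorem exists_eq_pred (hB : HasUniformBand r c w k T s) (hi : i < r) (hj : j < c - w)
    (hne : (i, j) ≠ (r - 1, c - w - 1)) :
    ∃ a b, a < r ∧ b < c - w ∧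
      delCols (promote r c T) σ w i j = delCols T s w a b - 1 ∧
      promote r (c - w) (stdFill r (c - w) (delCols T s w)) i j =
        stdFill r (c - w) (delCols T s w) a b - 1 := by
  have hc : 0 < c - w := by omega
  have hpath := slidePath_stdFill (A := delCols T s w) hB.rows_pos hc
  by_cases hon : ∃ m, υ m = (i, j)
  · obtain ⟨m, hm⟩ := hon
    have hlt := slidePath_lt (A := delCols T s w) hB.rows_pos hc (m + 1)
    refine ⟨_, _, hlt.1, hlt.2, hB.delCols_promote_of_slidePath_eq hm hne, ?_⟩
    rw [promote_of_slidePath_eq hB.rows_pos hc (hpath ▸ hm) hne, hpath]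
  · simp only [not_exists] at hon
    exact ⟨i, j, hi, hj, hB.delCols_promote_of_forall_ne hon,
      promote_of_forall_ne (hpath ▸ hon)⟩

theorem delCols_promote_last (hB : HasUniformBand r c w k T s) :
    delCols (promote r c T) σ w (r - 1) (c - w - 1) = r * c := by
  have := hB.update_offset_last
  have := hB.width_lt
  rw [delCols_of_le (by omega), show c - w - 1 + w = c - 1 by omega,
    promote_last hB.rows_pos hB.cols_pos]

theorem delCols_mem_Icc (hB : HasUniformBand r c w k T s) (hi : i < r) (hj : j < c - w) :
    delCols T s w i j ∈ Set.Icc 1 (r * c) := by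
  unfold delCols
  split_ifs
  exacts [hB.isRectSYT.2.2.1 i j hi (by omega), hB.isRectSYT.2.2.1 i (j + w) hi (by omega)]

end HasUniformBand

/-- Promotion preserves uniformly proper rectangular subtableaux.  If `T = T₁ S T₂`
with `S` a uniformly proper rectangular subtableau (occupying columns
`s i, …, s i + w - 1` of row `i`, content `{k+1, …, k+r*w}`) and `T₁` nonempty, then
`P(T) = T₁' S' T₂'` where `S'` (occupying columns `s' i, …, s' i + w - 1`) is the
uniformly proper rectangular subtableau obtained from `S` by decrementing every entry
by `1`, and `T₁' T₂'` is equivalent to `P(T₁ T₂)`. -/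
theorem promotion_preserves_subtableau (r c w k : ℕ) (T : ℕ → ℕ → ℕ) (s : ℕ → ℕ)
    (hr : 0 < r) (hT : IsRectSYT r c T)
    (hw : 0 < w) (hwc : w < c)
    (hfit : ∀ i, i < r → s i + w ≤ c)
    (hmono : ∀ i, i + 1 < r → s (i + 1) ≤ s i)
    (hT1 : 0 < s 0)
    (hcontent : ∀ v, (k < v ∧ v ≤ k + r * w) ↔ ∃ i j, i < r ∧ j < w ∧ T i (s i + j) = v)
    (hcol : ∀ i j, i + 1 < r → j < w → T i (s i + j) < T (i + 1) (s (i + 1) + j)) :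
    ∃ s' : ℕ → ℕ,
      (∀ i, i < r → s' i + w ≤ c) ∧
      (∀ i, i + 1 < r → s' (i + 1) ≤ s' i) ∧
      (∀ i j, i < r → j < w → promote r c T i (s' i + j) = T i (s i + j) - 1) ∧
      EquivFilling r (c - w) (delCols (promote r c T) s' w)
        (promote r (c - w) (stdFill r (c - w) (delCols T s w))) := by
  have hB : HasUniformBand r c w k T s := ⟨hr, hT, hw, hwc, hfit, hmono, hT1, hcontent, hcol⟩
  refine ⟨Function.update s (entryRow r c T s) (s (entryRow r c T s) - 1),
    fun i hi => hB.update_offset_add_le hi, fun i hi => hB.update_offset_succ_le hi,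
    fun i j hi hj => hB.promote_update_offset_add hi hj, ?_⟩
  refine equivFilling_of_eq_pred equivFilling_stdFill (fun a b ha hb => ?_) (fun a b ha hb => ?_)
    fun i j hi hj hne => hB.exists_eq_pred hi hj hne
  · rw [hB.delCols_promote_last]
    exact hB.delCols_mem_Icc ha hb
  · rw [promote_last hr (by omega)]
    exact ⟨one_le_stdFill ha hb, stdFill_le_mul⟩
end
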